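/- arXiv:1003.2958 — 3 statements merged into one kernel-verified Lean document; each statement's English description precedes it below -/
import Mathlib

section
/- Let w be a weighted graph on a finite vertex set V with |V| = n whose support graph is connected, let L be its Laplacian and L⁺ the Moore–Penrose pseudoinverse of L. Then the sum over all unordered pairs {u,v} with w(u,v) > 0 of w(u,v) · (χ_u − χ_v)ᵀ L⁺ (χ_u − χ_v) equals n − 1, where χ_u denotes the indicator vector of vertex u. -/
/-!
Writing `b_uv = χ_u - χ_v`, the Laplacian is `L = ½ ∑_{u,v} w(u,v) b_uv b_uvᵀ`, so the
left-hand side is `tr (L⁺ L)`. Since `L L⁺ L = L`, the matrix `L⁺ L` is idempotent of the same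
rank as `L`, so its trace is `rank L`. Finally `xᵀ L x = ½ ∑ w(u,v) (x_u - x_v)²` vanishes only
when `x` is constant along the edges of the support, which is connected; hence `ker L` is
spanned by the all-ones vector and `rank L = n - 1`.
-/

open Matrix

namespace Matrix

variable {n R : Type*} [Fintype n] [DecidableEq n]

theorem trace_eq_rank_of_isIdempotentElem [Field R] {P : Matrix n n R}
    (hP : IsIdempotentElem P) : P.trace = P.rank := by
  have hlin : IsIdempotentElem P.mulVecLin := by
    rw [IsIdempotentElem, Module.End.mul_eq_comp, ← mulVecLin_mul, hP.eq]
  rw [← trace_toLin'_eq, toLin'_apply',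
    (LinearMap.IsIdempotentElem.isProj_range _ hlin).trace, rank]

theorem trace_mul_eq_rank_of_mul_mul_eq_self [Field R] {A X : Matrix n n R}
    (h : A * X * A = A) : (X * A).trace = A.rank := by
  have hidem : IsIdempotentElem (X * A) := by
    rw [IsIdempotentElem, Matrix.mul_assoc, ← Matrix.mul_assoc A, h]
  have hrank : (X * A).rank = A.rank := by
    refine le_antisymm (rank_mul_le_right X A) ?_
    calc A.rank = (A * (X * A)).rank := by rw [← Matrix.mul_assoc, h]
      _ ≤ (X * A).rank := rank_mul_le_right A _
  rw [trace_eq_rank_of_isIdempotentElem hidem, hrank]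

theorem dotProduct_mulVec_single_sub_single [CommRing R] (A : Matrix n n R) (u v : n) :
    (Pi.single u 1 - Pi.single v 1 : n → R) ⬝ᵥ (A *ᵥ (Pi.single u 1 - Pi.single v 1)) =
      A u u - A u v - A v u + A v v := by
  simp only [mulVec_sub, sub_dotProduct, dotProduct_sub, mulVec_single_one, single_one_dotProduct,
    col_apply]
  ring

end Matrix

theorem SimpleGraph.Preconnected.apply_eq_of_forall_adj {V α : Type*} {G : SimpleGraph V}
    (hG : G.Preconnected) {f : V → α} (hf : ∀ u v, G.Adj u v → f u = f v) (u v : V) :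
    f u = f v := by
  obtain ⟨p⟩ := hG u v
  induction p with
  | nil => rfl
  | cons hadj _ ih => exact (hf _ _ hadj).trans ih

section WeightedLaplacian

variable {V R : Type*} [Fintype V] [DecidableEq V]

def weightedLaplacian [CommRing R] (w : V → V → R) : Matrix V V R :=
  Matrix.of fun u v => if u = v then ∑ x, w u x else -w u v

section CommRing

variable [CommRing R] {w : V → V → R}

theorem weightedLaplacian_apply (hdiag : ∀ u, w u u = 0) (u v : V) :
    weightedLaplacian w u v = (if u = v then ∑ x, w u x else 0) - w u v := by
  by_cases h : u = v
  · subst h; simp [weightedLaplacian, hdiag]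
  · simp [weightedLaplacian, h]

theorem weightedLaplacian_mulVec_apply (hdiag : ∀ u, w u u = 0) (x : V → R) (u : V) :
    (weightedLaplacian w *ᵥ x) u = ∑ v, w u v * (x u - x v) := by
  simp only [mulVec, dotProduct, weightedLaplacian_apply hdiag, sub_mul, ite_mul, zero_mul,
    Finset.sum_sub_distrib, Finset.sum_ite_eq, Finset.mem_univ, if_true, mul_sub, Finset.sum_mul]

theorem trace_weightedLaplacian_mul (hdiag : ∀ u, w u u = 0) (A : Matrix V V R) :
    (weightedLaplacian w * A).trace = ∑ u, ∑ v, w u v * (A u u - A v u) := by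
  simp only [trace, diag_apply, mul_apply, weightedLaplacian_apply hdiag, sub_mul, ite_mul,
    zero_mul, Finset.sum_sub_distrib, Finset.sum_ite_eq, Finset.mem_univ, if_true, mul_sub,
    Finset.sum_mul]

theorem two_mul_dotProduct_weightedLaplacian_mulVec (hsym : ∀ u v, w u v = w v u)
    (hdiag : ∀ u, w u u = 0) (x : V → R) :
    2 * (x ⬝ᵥ (weightedLaplacian w *ᵥ x)) = ∑ u, ∑ v, w u v * (x u - x v) ^ 2 := by
  have h : x ⬝ᵥ (weightedLaplacian w *ᵥ x) = ∑ u, ∑ v, w u v * (x u * (x u - x v)) := by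
    simp only [dotProduct, weightedLaplacian_mulVec_apply hdiag, Finset.mul_sum]
    exact Finset.sum_congr rfl fun u _ => Finset.sum_congr rfl fun v _ => by ring
  have h' : x ⬝ᵥ (weightedLaplacian w *ᵥ x) = ∑ u, ∑ v, w u v * (x v * (x v - x u)) := by
    rw [h, Finset.sum_comm]
    simp only [hsym]
  rw [two_mul]
  nth_rw 1 [h]
  rw [h', ← Finset.sum_add_distrib]
  refine Finset.sum_congr rfl fun u _ => ?_
  rw [← Finset.sum_add_distrib]
  exact Finset.sum_congr rfl fun v _ => by ring

theorem sum_mul_dotProduct_mulVec_single_sub_single (hsym : ∀ u v, w u v = w v u)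
    (hdiag : ∀ u, w u u = 0) (A : Matrix V V R) :
    ∑ u, ∑ v, w u v * ((Pi.single u 1 - Pi.single v 1 : V → R) ⬝ᵥ
        (A *ᵥ (Pi.single u 1 - Pi.single v 1))) = 2 * (weightedLaplacian w * A).trace := by
  have hswap : ∑ u, ∑ v, w u v * (A v v - A u v) = ∑ u, ∑ v, w u v * (A u u - A v u) := by
    rw [Finset.sum_comm]
    simp only [hsym]
  rw [trace_weightedLaplacian_mul hdiag, two_mul]
  nth_rw 2 [← hswap]
  simp only [dotProduct_mulVec_single_sub_single, ← Finset.sum_add_distrib]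
  exact Finset.sum_congr rfl fun u _ => Finset.sum_congr rfl fun v _ => by ring

end CommRing

section LinearOrderedField

variable [Field R] [LinearOrder R] [IsStrictOrderedRing R] {w : V → V → R}

theorem apply_eq_of_weightedLaplacian_mulVec_eq_zero (hsym : ∀ u v, w u v = w v u)
    (hnn : ∀ u v, 0 ≤ w u v) (hdiag : ∀ u, w u u = 0) {x : V → R}
    (hx : weightedLaplacian w *ᵥ x = 0) {u v : V} (huv : 0 < w u v) : x u = x v := by
  have hterms : ∑ u, ∑ v, w u v * (x u - x v) ^ 2 = 0 := by
    rw [← two_mul_dotProduct_weightedLaplacian_mulVec hsym hdiag, hx, dotProduct_zero, mul_zero]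
  have hnonneg : ∀ u v, 0 ≤ w u v * (x u - x v) ^ 2 := fun u v => by
    have := hnn u v; positivity
  rw [Finset.sum_eq_zero_iff_of_nonneg fun u _ => Finset.sum_nonneg fun v _ => hnonneg u v]
    at hterms
  have huv' := (Finset.sum_eq_zero_iff_of_nonneg fun v _ => hnonneg u v).1
    (hterms u (Finset.mem_univ u)) v (Finset.mem_univ v)
  rw [mul_eq_zero, pow_eq_zero_iff two_ne_zero, sub_eq_zero] at huv'
  exact huv'.resolve_left huv.ne'

theorem ker_mulVecLin_weightedLaplacian (hsym : ∀ u v, w u v = w v u)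
    (hnn : ∀ u v, 0 ≤ w u v) (hdiag : ∀ u, w u u = 0) {G : SimpleGraph V}
    (hG : ∀ u v, G.Adj u v → 0 < w u v) (hconn : G.Connected) :
    LinearMap.ker (weightedLaplacian w).mulVecLin = Submodule.span R {1} := by
  obtain ⟨u₀⟩ := hconn.nonempty
  ext x
  rw [LinearMap.mem_ker, mulVecLin_apply, Submodule.mem_span_singleton]
  constructor
  · intro hx
    have hconst := hconn.preconnected.apply_eq_of_forall_adj fun u v huv =>
      apply_eq_of_weightedLaplacian_mulVec_eq_zero hsym hnn hdiag hx (hG u v huv)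
    exact ⟨x u₀, funext fun v => by simp [hconst v u₀]⟩
  · rintro ⟨a, rfl⟩
    funext u
    simp [weightedLaplacian_mulVec_apply hdiag]

theorem rank_weightedLaplacian_add_one (hsym : ∀ u v, w u v = w v u)
    (hnn : ∀ u v, 0 ≤ w u v) (hdiag : ∀ u, w u u = 0) {G : SimpleGraph V}
    (hG : ∀ u v, G.Adj u v → 0 < w u v) (hconn : G.Connected) :
    (weightedLaplacian w).rank + 1 = Fintype.card V := by
  obtain ⟨u₀⟩ := hconn.nonempty
  have hone : (1 : V → R) ≠ 0 := fun h => one_ne_zero (congrFun h u₀)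
  rw [rank, ← finrank_span_singleton (K := R) hone,
    ← ker_mulVecLin_weightedLaplacian hsym hnn hdiag hG hconn,
    LinearMap.finrank_range_add_finrank_ker, Module.finrank_fintype_fun_eq_card]

end LinearOrderedField

end WeightedLaplacian

theorem sum_effective_resistance_eq_general {V : Type*} [Fintype V] [DecidableEq V]
    (n : ℕ) (hn : Fintype.card V = n)
    (w : V → V → ℝ) (hsym : ∀ u v, w u v = w v u)
    (hnn : ∀ u v, 0 ≤ w u v) (hdiag : ∀ u, w u u = 0)
    (G : SimpleGraph V) (hG : ∀ u v, G.Adj u v ↔ 0 < w u v) (hconn : G.Connected)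
    (L Lp : Matrix V V ℝ)
    (hL : L = Matrix.of fun u v => if u = v then ∑ x, w u x else - w u v)
    (hp1 : L * Lp * L = L) :
    (∑ u, ∑ v, if 0 < w u v then
        w u v * ((Pi.single u 1 - Pi.single v 1 : V → ℝ) ⬝ᵥ
          (Lp *ᵥ (Pi.single u 1 - Pi.single v 1 : V → ℝ)))
      else 0) / 2 = (n : ℝ) - 1 := by
  obtain rfl : L = weightedLaplacian w := hL
  have hedge : ∀ u v (r : ℝ), (if 0 < w u v then w u v * r else 0) = w u v * r := by
    intro u v r
    split_ifs with h
    · rfl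
    · rw [← (hnn u v).eq_of_not_lt h, zero_mul]
  have hrank : ((weightedLaplacian w).rank : ℝ) + 1 = n := by
    exact_mod_cast hn ▸
      rank_weightedLaplacian_add_one hsym hnn hdiag (fun u v => (hG u v).1) hconn
  simp only [hedge]
  rw [sum_mul_dotProduct_mulVec_single_sub_single hsym hdiag, trace_mul_comm,
    trace_mul_eq_rank_of_mul_mul_eq_self hp1]
  linarith

/-- For a connected weighted graph on `n` vertices with Laplacian `L`
and pseudoinverse `L⁺`, the sum over edges of `w(u,v) · (χ_u − χ_v)ᵀ L⁺ (χ_u − χ_v)`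
equals `n − 1`.  (The sum over unordered pairs is written as half the sum over
ordered pairs.) -/
theorem sum_effective_resistance_eq {V : Type*} [Fintype V] [DecidableEq V]
    (n : ℕ) (hn : Fintype.card V = n)
    (w : V → V → ℝ) (hsym : ∀ u v, w u v = w v u)
    (hnn : ∀ u v, 0 ≤ w u v) (hdiag : ∀ u, w u u = 0)
    (G : SimpleGraph V) (hG : ∀ u v, G.Adj u v ↔ 0 < w u v) (hconn : G.Connected)
    (L Lp : Matrix V V ℝ)
    (hL : L = Matrix.of fun u v => if u = v then ∑ x, w u x else - w u v)
    (hp1 : L * Lp * L = L) (hp2 : Lp * L * Lp = Lp)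
    (hp3 : (L * Lp)ᵀ = L * Lp) (hp4 : (Lp * L)ᵀ = Lp * L) :
    (∑ u, ∑ v, if 0 < w u v then
        w u v * ((Pi.single u 1 - Pi.single v 1 : V → ℝ) ⬝ᵥ
          (Lp *ᵥ (Pi.single u 1 - Pi.single v 1 : V → ℝ)))
      else 0) / 2 = (n : ℝ) - 1 :=
  sum_effective_resistance_eq_general n hn w hsym hnn hdiag G hG hconn L Lp hL hp1
end

section
/- Let B be an m×n real matrix, L = Bᵀ B, L⁺ the Moore–Penrose pseudoinverse of L, and Π = B L⁺ Bᵀ. Let S be an m×m diagonal matrix with nonnegative diagonal entries and let L̃ = Bᵀ S B. If ε ≥ 0 is a real number such that |yᵀ (Π S Π − Π) y| ≤ ε · ‖y‖² for every y ∈ ℝᵐ (Euclidean norm), then (1 − ε) · L ⪯ L̃ ⪯ (1 + ε) · L in the Loewner order. -/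
/-!
If `L = Bᵀ B` and `L G L = L`, then `Π = B G Bᵀ` fixes the columns of `B` on both sides:
`Π B = B` and `Bᵀ Π = Bᵀ`, because `Bᵀ B X = 0` forces `B X = 0`. Hence
`Bᵀ (Π S Π − Π) B = L̃ − L`, and testing the hypothesis on `y = B x` gives
`|xᵀ (L̃ − L) x| ≤ ε · xᵀ L x`, which is the two-sided Loewner bound.
-/

open Matrix

namespace Matrix

variable {m n : Type*} [Fintype m] [Fintype n]

theorem dotProduct_mulVec_transpose_mul_mul {α : Type*} [CommSemiring α] (B : Matrix m n α)
    (M : Matrix m m α) (x : n → α) :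
    x ⬝ᵥ ((Bᵀ * M * B) *ᵥ x) = (B *ᵥ x) ⬝ᵥ (M *ᵥ (B *ᵥ x)) := by
  rw [← mulVec_mulVec, ← mulVec_mulVec, dotProduct_mulVec, vecMul_transpose]

section GeneralizedInverse

variable [DecidableEq n] {B : Matrix m n ℝ} {G : Matrix n n ℝ}

theorem mul_mul_transpose_mul_eq_self (hG : Bᵀ * B * G * (Bᵀ * B) = Bᵀ * B) :
    B * G * Bᵀ * B = B := by
  have h : Bᴴ * B * (G * (Bᵀ * B) - 1) = 0 := by
    rw [conjTranspose_eq_transpose_of_trivial, Matrix.mul_sub, Matrix.mul_one,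
      ← Matrix.mul_assoc, hG, sub_self]
  rw [conjTranspose_mul_self_mul_eq_zero, Matrix.mul_sub, Matrix.mul_one, sub_eq_zero] at h
  simpa only [Matrix.mul_assoc] using h

theorem transpose_mul_mul_mul_transpose_eq_self (hG : Bᵀ * B * G * (Bᵀ * B) = Bᵀ * B) :
    Bᵀ * (B * G * Bᵀ) = Bᵀ := by
  have h : (Bᵀ * B * G - 1) * (Bᴴ * B) = 0 := by
    rw [conjTranspose_eq_transpose_of_trivial, Matrix.sub_mul, Matrix.one_mul, hG, sub_self]
  rw [mul_conjTranspose_mul_self_eq_zero, conjTranspose_eq_transpose_of_trivial, Matrix.sub_mul,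
    Matrix.one_mul, sub_eq_zero] at h
  simpa only [Matrix.mul_assoc] using h

theorem transpose_mul_sandwich_mul_eq (hG : Bᵀ * B * G * (Bᵀ * B) = Bᵀ * B)
    (S : Matrix m m ℝ) :
    Bᵀ * (B * G * Bᵀ * S * (B * G * Bᵀ) - B * G * Bᵀ) * B = Bᵀ * S * B - Bᵀ * B := by
  calc _ = Bᵀ * (B * G * Bᵀ) * S * (B * G * Bᵀ * B) - Bᵀ * (B * G * Bᵀ) * B := by
        simp only [Matrix.mul_sub, Matrix.sub_mul, Matrix.mul_assoc]
    _ = _ := by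
      rw [transpose_mul_mul_mul_transpose_eq_self hG, mul_mul_transpose_mul_eq_self hG]

end GeneralizedInverse

theorem posSemidef_of_abs_dotProduct_sub_mulVec_le {A L : Matrix n n ℝ} (hA : A.IsHermitian)
    (hL : L.IsHermitian) (ε : ℝ)
    (h : ∀ x, |x ⬝ᵥ ((A - L) *ᵥ x)| ≤ ε * (x ⬝ᵥ (L *ᵥ x))) :
    (A - (1 - ε) • L).PosSemidef ∧ ((1 + ε) • L - A).PosSemidef := by
  have hquad (x : n → ℝ) :
      |x ⬝ᵥ (A *ᵥ x) - x ⬝ᵥ (L *ᵥ x)| ≤ ε * (x ⬝ᵥ (L *ᵥ x)) := by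
    simpa only [sub_mulVec, dotProduct_sub] using h x
  constructor
  · refine .of_dotProduct_mulVec_nonneg (hA.sub (hL.smul (.all _))) fun x => ?_
    simp only [star_trivial, sub_mulVec, smul_mulVec, dotProduct_sub, dotProduct_smul, smul_eq_mul]
    linarith [(abs_le.mp (hquad x)).1]
  · refine .of_dotProduct_mulVec_nonneg ((hL.smul (.all _)).sub hA) fun x => ?_
    simp only [star_trivial, sub_mulVec, smul_mulVec, dotProduct_sub, dotProduct_smul, smul_eq_mul]
    linarith [(abs_le.mp (hquad x)).2]

end Matrix

theorem loewner_bound_of_projection_perturbation_general {m n : ℕ}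
    (B : Matrix (Fin m) (Fin n) ℝ) (L Lp Ltil : Matrix (Fin n) (Fin n) ℝ)
    (S : Matrix (Fin m) (Fin m) ℝ)
    (hL : L = Bᵀ * B)
    (hp1 : L * Lp * L = L)
    (hSdiag : ∀ i j, i ≠ j → S i j = 0)
    (hLtil : Ltil = Bᵀ * S * B)
    (Pr : Matrix (Fin m) (Fin m) ℝ) (hPr : Pr = B * Lp * Bᵀ)
    (ε : ℝ)
    (hbound : ∀ y : Fin m → ℝ, |y ⬝ᵥ ((Pr * S * Pr - Pr) *ᵥ y)| ≤ ε * (y ⬝ᵥ y)) :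
    (Ltil - (1 - ε) • L).PosSemidef ∧ ((1 + ε) • L - Ltil).PosSemidef := by
  subst hL hLtil hPr
  have hS : S.IsHermitian := isHermitian_iff_isSymm.mpr (IsDiag.isSymm hSdiag)
  have hBSB := isHermitian_conjTranspose_mul_mul B hS
  have hBB := isHermitian_conjTranspose_mul_self B
  rw [conjTranspose_eq_transpose_of_trivial] at hBSB hBB
  refine posSemidef_of_abs_dotProduct_sub_mulVec_le hBSB hBB ε fun x => ?_
  have hnorm : x ⬝ᵥ ((Bᵀ * B) *ᵥ x) = (B *ᵥ x) ⬝ᵥ (B *ᵥ x) := by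
    rw [← mulVec_mulVec, dotProduct_mulVec, vecMul_transpose]
  rw [← transpose_mul_sandwich_mul_eq hp1, dotProduct_mulVec_transpose_mul_mul, hnorm]
  exact hbound (B *ᵥ x)

/-- If `‖Π S Π − Π‖` (as a quadratic form) is at most `ε`, then
`(1 − ε) L ⪯ L̃ ⪯ (1 + ε) L` in the Loewner order, where `L = Bᵀ B`, `Π = B L⁺ Bᵀ`
and `L̃ = Bᵀ S B` for a nonnegative diagonal `S`. -/
theorem loewner_bound_of_projection_perturbation {m n : ℕ}
    (B : Matrix (Fin m) (Fin n) ℝ) (L Lp Ltil : Matrix (Fin n) (Fin n) ℝ)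
    (S : Matrix (Fin m) (Fin m) ℝ)
    (hL : L = Bᵀ * B)
    (hp1 : L * Lp * L = L) (hp2 : Lp * L * Lp = Lp)
    (hp3 : (L * Lp)ᵀ = L * Lp) (hp4 : (Lp * L)ᵀ = Lp * L)
    (hSdiag : ∀ i j, i ≠ j → S i j = 0) (hSnn : ∀ i, 0 ≤ S i i)
    (hLtil : Ltil = Bᵀ * S * B)
    (Pr : Matrix (Fin m) (Fin m) ℝ) (hPr : Pr = B * Lp * Bᵀ)
    (ε : ℝ) (hε : 0 ≤ ε)
    (hbound : ∀ y : Fin m → ℝ, |y ⬝ᵥ ((Pr * S * Pr - Pr) *ᵥ y)| ≤ ε * (y ⬝ᵥ y)) :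
    (Ltil - (1 - ε) • L).PosSemidef ∧ ((1 + ε) • L - Ltil).PosSemidef :=
  loewner_bound_of_projection_perturbation_general B L Lp Ltil S hL hp1 hSdiag hLtil Pr hPr ε hbound
end

section
/- Let A and B be n×n real symmetric positive semidefinite matrices with A ⪯ B in the Loewner order and with equal kernels (A x = 0 iff B x = 0). Then B⁺ ⪯ A⁺, i.e., xᵀ B⁺ x ≤ xᵀ A⁺ x for every x ∈ ℝⁿ, where A⁺ and B⁺ denote Moore–Penrose pseudoinverses. -/
/-! With `P`, `Q` the pseudoinverses of `A`, `B`, the matrices `P * A` and `Q * B` are the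
orthogonal projections onto the orthogonal complements of the kernels, so equal kernels give
`P * A = Q * B`, hence `P * A * Q = Q` and, as `P` and `Q` are Hermitian, `Q * A * P = Q`.
These identities turn `P - Q` into `(P - Q)ᴴ * A * (P - Q) + Qᴴ * (B - A) * Q`, a sum of
positive semidefinite matrices. -/

open Matrix

namespace Matrix

variable {k m n R : Type*} [Fintype m] [Fintype n] [Ring R]

theorem mul_mul_mul_eq_of_ker_le {A : Matrix m n R} {P : Matrix n m R} {B : Matrix k n R}
    (hAPA : A * P * A = A) (hker : ∀ x, A *ᵥ x = 0 → B *ᵥ x = 0) : B * (P * A) = B := by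
  refine ext_iff_mulVec.2 fun v => ?_
  have hA : A *ᵥ (v - (P * A) *ᵥ v) = 0 := by
    rw [mulVec_sub, mulVec_mulVec, ← Matrix.mul_assoc, hAPA, sub_self]
  have hB := hker _ hA
  rw [mulVec_sub, mulVec_mulVec, sub_eq_zero] at hB
  exact hB.symm

section StarRing

variable [StarRing R]

structure IsMoorePenroseInverse (A : Matrix m n R) (P : Matrix n m R) : Prop where
  mul_mul_self : A * P * A = A
  mul_mul_self' : P * A * P = P
  conjTranspose_mul_left : (A * P)ᴴ = A * P
  conjTranspose_mul_right : (P * A)ᴴ = P * A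

namespace IsMoorePenroseInverse

variable {A : Matrix m n R} {P Q : Matrix n m R}

theorem unique (hP : IsMoorePenroseInverse A P) (hQ : IsMoorePenroseInverse A Q) : P = Q := by
  have hAP : A * P = A * Q :=
    calc A * P = (A * Q * (A * P))ᴴ := by rw [← Matrix.mul_assoc, hQ.1, hP.3]
      _ = A * P * (A * Q) := by rw [conjTranspose_mul, hP.3, hQ.3]
      _ = A * Q := by rw [← Matrix.mul_assoc, hP.1]
  have hPA : P * A = Q * A :=
    calc P * A = (P * A * (Q * A))ᴴ := by
          rw [Matrix.mul_assoc P A, ← Matrix.mul_assoc A Q A, hQ.1, hP.4]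
      _ = Q * A * (P * A) := by rw [conjTranspose_mul, hP.4, hQ.4]
      _ = Q * A := by rw [Matrix.mul_assoc, ← Matrix.mul_assoc A, hP.1]
  calc P = P * A * P := hP.2.symm
    _ = Q * (A * Q) := by rw [hPA, Matrix.mul_assoc, hAP]
    _ = Q := by rw [← Matrix.mul_assoc, hQ.2]

theorem conjTranspose (hP : IsMoorePenroseInverse A P) : IsMoorePenroseInverse Aᴴ Pᴴ where
  mul_mul_self := by simpa only [conjTranspose_mul, Matrix.mul_assoc] using congrArg (·ᴴ) hP.1
  mul_mul_self' := by simpa only [conjTranspose_mul, Matrix.mul_assoc] using congrArg (·ᴴ) hP.2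
  conjTranspose_mul_left := by rw [← conjTranspose_mul, conjTranspose_conjTranspose, hP.4]
  conjTranspose_mul_right := by rw [← conjTranspose_mul, conjTranspose_conjTranspose, hP.3]

theorem isHermitian {A P : Matrix n n R} (hP : IsMoorePenroseInverse A P) (hA : A.IsHermitian) :
    P.IsHermitian :=
  (hA.eq ▸ hP.conjTranspose : IsMoorePenroseInverse A Pᴴ).unique hP

end IsMoorePenroseInverse

theorem mul_eq_mul_of_ker_eq [Fintype k] {A : Matrix m n R} {P : Matrix n m R}
    {B : Matrix k n R} {Q : Matrix n k R} (hAPA : A * P * A = A) (hPA : (P * A)ᴴ = P * A)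
    (hBQB : B * Q * B = B) (hQB : (Q * B)ᴴ = Q * B) (hker : ∀ x, A *ᵥ x = 0 ↔ B *ᵥ x = 0) :
    P * A = Q * B := by
  have hB : B * (P * A) = B := mul_mul_mul_eq_of_ker_le hAPA fun x => (hker x).1
  have hA : A * (Q * B) = A := mul_mul_mul_eq_of_ker_le hBQB fun x => (hker x).2
  calc P * A = (Q * B * (P * A))ᴴ := by
        rw [conjTranspose_mul, hPA, hQB, Matrix.mul_assoc, hA]
    _ = Q * B := by rw [Matrix.mul_assoc, hB, hQB]

end StarRing

theorem _root_.sub_eq_mul_sub_mul_sub_add_mul_sub_mul {S : Type*} [Ring S] {a b p q : S}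
    (hp : p * a * p = p) (hq : q * b * q = q) (hpq : p * a * q = q) (hqp : q * a * p = q) :
    p - q = (p - q) * a * (p - q) + q * (b - a) * q := by
  have : (p - q) * a * (p - q) + q * (b - a) * q
      = p * a * p - p * a * q - q * a * p + q * b * q := by noncomm_ring
  rw [this, hp, hq, hpq, hqp]
  abel

theorem IsMoorePenroseInverse.posSemidef_sub_of_ker_eq [PartialOrder R] [StarRing R]
    [AddLeftMono R] {A B P Q : Matrix n n R} (hP : IsMoorePenroseInverse A P)
    (hQ : IsMoorePenroseInverse B Q) (hA : A.PosSemidef) (hAB : (B - A).PosSemidef)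
    (hker : ∀ x, A *ᵥ x = 0 ↔ B *ᵥ x = 0) : (P - Q).PosSemidef := by
  classical
  have hB : B.IsHermitian := by simpa using hA.1.add hAB.1
  have hPh := hP.isHermitian hA.1
  have hQh := hQ.isHermitian hB
  have hPAQ : P * A * Q = Q := by
    rw [mul_eq_mul_of_ker_eq hP.1 hP.4 hQ.1 hQ.4 hker, hQ.2]
  have hQAP : Q * A * P = Q := by
    simpa only [conjTranspose_mul, hPh.eq, hQh.eq, hA.1.eq, Matrix.mul_assoc] using
      congrArg (·ᴴ) hPAQ
  have hsum : P - Q = (P - Q)ᴴ * A * (P - Q) + Qᴴ * (B - A) * Q := by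
    rw [(hPh.sub hQh).eq, hQh.eq]
    exact sub_eq_mul_sub_mul_sub_add_mul_sub_mul hP.2 hQ.2 hPAQ hQAP
  rw [hsum]
  exact (hA.conjTranspose_mul_mul_same _).add (hAB.conjTranspose_mul_mul_same _)

end Matrix

theorem pinv_antitone_general {n : ℕ} (A B Ap Bp : Matrix (Fin n) (Fin n) ℝ)
    (hA : A.PosSemidef)
    (hAB : (B - A).PosSemidef)
    (hker : ∀ x : Fin n → ℝ, A *ᵥ x = 0 ↔ B *ᵥ x = 0)
    (hA1 : A * Ap * A = A) (hA2 : Ap * A * Ap = Ap)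
    (hA3 : (A * Ap)ᵀ = A * Ap) (hA4 : (Ap * A)ᵀ = Ap * A)
    (hB1 : B * Bp * B = B) (hB2 : Bp * B * Bp = Bp)
    (hB3 : (B * Bp)ᵀ = B * Bp) (hB4 : (Bp * B)ᵀ = Bp * B) :
    ∀ x : Fin n → ℝ, x ⬝ᵥ (Bp *ᵥ x) ≤ x ⬝ᵥ (Ap *ᵥ x) := by
  have hAp : IsMoorePenroseInverse A Ap := ⟨hA1, hA2, hA3, hA4⟩
  have hBp : IsMoorePenroseInverse B Bp := ⟨hB1, hB2, hB3, hB4⟩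
  intro x
  have h := (hAp.posSemidef_sub_of_ker_eq hBp hA hAB hker).dotProduct_mulVec_nonneg x
  rwa [star_trivial, sub_mulVec, dotProduct_sub, sub_nonneg] at h

/-- If `A ⪯ B` are positive semidefinite with equal kernels, then
`B⁺ ⪯ A⁺` as quadratic forms. -/
theorem pinv_antitone {n : ℕ} (A B Ap Bp : Matrix (Fin n) (Fin n) ℝ)
    (hA : A.PosSemidef) (hB : B.PosSemidef)
    (hAB : (B - A).PosSemidef)
    (hker : ∀ x : Fin n → ℝ, A *ᵥ x = 0 ↔ B *ᵥ x = 0)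
    (hA1 : A * Ap * A = A) (hA2 : Ap * A * Ap = Ap)
    (hA3 : (A * Ap)ᵀ = A * Ap) (hA4 : (Ap * A)ᵀ = Ap * A)
    (hB1 : B * Bp * B = B) (hB2 : Bp * B * Bp = Bp)
    (hB3 : (B * Bp)ᵀ = B * Bp) (hB4 : (Bp * B)ᵀ = Bp * B) :
    ∀ x : Fin n → ℝ, x ⬝ᵥ (Bp *ᵥ x) ≤ x ⬝ᵥ (Ap *ᵥ x) :=
  pinv_antitone_general A B Ap Bp hA hAB hker hA1 hA2 hA3 hA4 hB1 hB2 hB3 hB4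
end
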